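/- arXiv:1412.3730 — 3 statements merged into one kernel-verified Lean document; each statement's English description precedes it below -/
import Mathlib

section
/- Let Θ be a countable model with prior π, let η ∈ (0,1) with Σ_{θ∈Θ} π(θ)^η < ∞, let ε > 0, A > 0, γ > 0 and n ≥ 1, and for θ* ∈ Θ let Θ̄_{η,ε}(θ*) = { θ ∈ Θ : d_η(θ* ‖ θ) > ε }. Then the Bayesian joint probability Π( (θ*, Z^n) : Σ_{θ ∈ Θ̄_{η,ε}(θ*)} π(θ) ∏_{i=1}^n f_θ(Z_i) / ∏_{i=1}^n f_{θ*}(Z_i) ≥ A^{1+γ} ) ≤ (Σ_{θ∈Θ} π(θ)^η) · e^{−nηε} · A^{−η(1+γ)}. -/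
open MeasureTheory ENNReal

noncomputable section

lemma rpow_tsum_le {ι : Type*} [Countable ι] (a : ι → ℝ≥0∞) {p : ℝ} (hp : 0 < p) (hp1 : p ≤ 1) :
    (∑' i, a i) ^ p ≤ ∑' i, a i ^ p := by
  have hs : ∀ s : Finset ι, (∑ i ∈ s, a i) ^ p ≤ ∑ i ∈ s, a i ^ p := by
    intro s
    induction s using Finset.cons_induction with
    | empty => simp [ENNReal.zero_rpow_of_pos hp]
    | cons i s hi ih =>
        rw [Finset.sum_cons, Finset.sum_cons]
        exact le_trans (ENNReal.rpow_add_le_add_rpow _ _ hp.le hp1) (add_le_add le_rfl ih)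
  have h1 : Filter.Tendsto (fun s : Finset ι => (∑ i ∈ s, a i) ^ p) Filter.atTop
      (nhds ((∑' i, a i) ^ p)) :=
    (ENNReal.continuous_rpow_const.tendsto _).comp ENNReal.summable.hasSum
  exact le_of_tendsto h1 (Filter.Eventually.of_forall fun s =>
    le_trans (hs s) (ENNReal.sum_le_tsum s))

lemma lintegral_pi_prod {Z : Type*} [MeasurableSpace Z] (ρ : Measure Z) [SigmaFinite ρ]
    (n : ℕ) (g : Z → ℝ≥0∞) (hg : Measurable g) :
    ∫⁻ z : Fin n → Z, ∏ i, g (z i) ∂(Measure.pi fun _ : Fin n => ρ)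
      = (∫⁻ x, g x ∂ρ) ^ n := by
  induction n with
  | zero => simp
  | succ n ih =>
      have hmp := (MeasureTheory.measurePreserving_piFinSuccAbove
        (fun _ : Fin (n + 1) => ρ) 0).symm
      have hfm : Measurable fun z : Fin (n + 1) → Z => ∏ i, g (z i) :=
        Finset.measurable_prod _ fun i _ => hg.comp (measurable_pi_apply i)
      rw [← hmp.lintegral_comp hfm]
      simp_rw [MeasurableEquiv.piFinSuccAbove_symm_apply]
      simp only [Fin.insertNthEquiv_apply, Fin.prod_univ_succ, Fin.insertNth_zero,
        Fin.zero_succAbove, Fin.cons_zero, Fin.cons_succ, cast_eq]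
      have h2 : Measurable fun y : Fin n → Z => ∏ i, g (y i) :=
        Finset.measurable_prod _ fun i _ => hg.comp (measurable_pi_apply i)
      rw [lintegral_prod_mul (f := g) (g := fun y : Fin n → Z => ∏ i, g (y i))
        hg.aemeasurable h2.aemeasurable]
      rw [ih, pow_succ, mul_comm]

lemma integrable_rpow_mul {Z : Type*} [MeasurableSpace Z] {ρ : Measure Z} {g h : Z → ℝ}
    (hgm : Measurable g) (hhm : Measurable h) (hgp : ∀ x, 0 < g x) (hhp : ∀ x, 0 < h x)
    (hgi : Integrable g ρ) (hhi : Integrable h ρ) {η : ℝ} (hη0 : 0 ≤ η) (hη1 : η ≤ 1) :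
    Integrable (fun x => g x ^ (1 - η) * h x ^ η) ρ := by
  have hm : Measurable fun x => g x ^ (1 - η) * h x ^ η :=
    (hgm.pow measurable_const).mul (hhm.pow measurable_const)
  refine Integrable.mono' ((hgi.const_mul (1 - η)).add (hhi.const_mul η))
    hm.aestronglyMeasurable (Filter.Eventually.of_forall fun x => ?_)
  rw [Real.norm_eq_abs, abs_of_nonneg (mul_nonneg (Real.rpow_nonneg (hgp x).le _) (Real.rpow_nonneg (hhp x).le _))]
  exact Real.geom_mean_le_arith_mean2_weighted (by linarith) hη0 (hgp x).le (hhp x).le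
    (by ring)

lemma int_le_exp {I : ℝ} (hI : 0 ≤ I) {η ε : ℝ} (hη0 : 0 < η)
    (h : ε < -(1 / η) * Real.log I) : I ≤ Real.exp (-(η * ε)) := by
  rcases hI.eq_or_lt with h0 | h0
  · rw [← h0]; exact (Real.exp_pos _).le
  · have h2 : η * ε < η * (-(1 / η) * Real.log I) := mul_lt_mul_of_pos_left h hη0
    rw [show η * (-(1 / η) * Real.log I) = -Real.log I by field_simp] at h2
    calc I = Real.exp (Real.log I) := (Real.exp_log h0).symm
    _ ≤ Real.exp (-(η * ε)) := Real.exp_le_exp.2 (by linarith)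

/-- The Rényi divergence of order `1 - η`:
`d_η(θ* ‖ θ) = -(1/η) log ∫ f_{θ*}^{1-η} f_θ^η dρ`. -/
def renyi {Z : Type*} [MeasurableSpace Z] (ρ : Measure Z) {Θ : Type*}
    (f : Θ → Z → ℝ) (η : ℝ) (θstar θ : Θ) : ℝ :=
  -(1 / η) * Real.log (∫ x, f θstar x ^ (1 - η) * f θ x ^ η ∂ρ)

/-- The Bayesian joint probability `Π` of an event `E` (which may depend on the
sampled parameter `θ*`): `Σ_{θ*} π(θ*) · P_{θ*}^{⊗n}(E θ*)`, where `P_{θ*}^{⊗n}` is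
the product measure on `Z^n` with density `∏_i f_{θ*}(z_i)` w.r.t. `ρ^{⊗n}`. -/
def jointProb {Z : Type*} [MeasurableSpace Z] (ρ : Measure Z) [SigmaFinite ρ]
    {Θ : Type*} (π : Θ → ℝ) (f : Θ → Z → ℝ) (n : ℕ)
    (E : Θ → Set (Fin n → Z)) : ℝ≥0∞ :=
  ∑' θstar, ENNReal.ofReal (π θstar) *
    ((Measure.pi fun _ : Fin n => ρ).withDensity
      fun z => ENNReal.ofReal (∏ i, f θstar (z i))) (E θstar)

/-- The Bayesian joint probability that the prior-weighted likelihood ratio of the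
parameters far from `θ*` in Rényi divergence exceeds `A^{1+γ}` is at most
`(Σ_θ π(θ)^η) e^{-nηε} A^{-η(1+γ)}`. -/
theorem bayesian_likelihood_ratio_far_parameters_bound
    {Z : Type*} [MeasurableSpace Z] (ρ : Measure Z) [SigmaFinite ρ]
    {Θ : Type*} [Countable Θ]
    (f : Θ → Z → ℝ) (hf_meas : ∀ θ, Measurable (f θ))
    (hf_pos : ∀ θ x, 0 < f θ x)
    (hf_int : ∀ θ, ∫ x, f θ x ∂ρ = 1)
    (π : Θ → ℝ) (hπ_pos : ∀ θ, 0 < π θ) (hπ_sum : ∑' θ, π θ = 1)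
    (η : ℝ) (hη : η ∈ Set.Ioo (0 : ℝ) 1)
    (hsum : Summable fun θ => π θ ^ η)
    (ε : ℝ) (hε : 0 < ε) (A : ℝ) (hA : 0 < A) (γ : ℝ) (hγ : 0 < γ)
    (n : ℕ) (hn : 1 ≤ n) :
    jointProb ρ π f n
        (fun θstar =>
          {z | A ^ (1 + γ) ≤
            ∑' θ : {θ : Θ // ε < renyi ρ f η θstar θ},
              π θ.1 * (∏ i, f θ.1 (z i)) / ∏ i, f θstar (z i)})
      ≤ ENNReal.ofReal
          ((∑' θ, π θ ^ η) * Real.exp (-(n * η * ε)) * A ^ (-(η * (1 + γ)))) := by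
  obtain ⟨hη0, hη1⟩ := hη
  have hInt : ∀ θ, Integrable (f θ) ρ := fun θ => by
    by_contra h
    exact one_ne_zero ((hf_int θ).symm.trans (integral_undef h))
  have hprod_pos : ∀ θ (z : Fin n → Z), 0 < ∏ i, f θ (z i) := fun θ z =>
    Finset.prod_pos fun i _ => hf_pos θ (z i)
  have hFmeas : ∀ θ, Measurable fun z : Fin n → Z => ENNReal.ofReal (∏ i, f θ (z i)) :=
    fun θ => ENNReal.measurable_ofReal.comp
      (Finset.measurable_prod _ fun i _ => (hf_meas θ).comp (measurable_pi_apply i))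
  set ν := Measure.pi fun _ : Fin n => ρ with hν
  set B := ENNReal.ofReal
      ((∑' θ, π θ ^ η) * Real.exp (-(n * η * ε)) * A ^ (-(η * (1 + γ)))) with hB
  have main : ∀ θstar,
      (ν.withDensity fun z => ENNReal.ofReal (∏ i, f θstar (z i)))
        {z | A ^ (1 + γ) ≤
          ∑' θ : {θ : Θ // ε < renyi ρ f η θstar θ},
            π θ.1 * (∏ i, f θ.1 (z i)) / ∏ i, f θstar (z i)} ≤ B := by
    intro θstar
    set μ := ν.withDensity fun z => ENNReal.ofReal (∏ i, f θstar (z i)) with hμ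
    set G : {θ : Θ // ε < renyi ρ f η θstar θ} → (Fin n → Z) → ℝ≥0∞ := fun θ z =>
      ENNReal.ofReal (π θ.1) * ENNReal.ofReal (∏ i, f θ.1 (z i)) *
        (ENNReal.ofReal (∏ i, f θstar (z i)))⁻¹ with hG
    set T : (Fin n → Z) → ℝ≥0∞ := fun z => ∑' θ, G θ z with hT
    have hGmeas : ∀ θ, Measurable (G θ) := fun θ =>
      (measurable_const.mul (hFmeas θ.1)).mul (hFmeas θstar).inv
    have hTmeas : Measurable T := Measurable.ennreal_tsum hGmeas
    set c := ENNReal.ofReal (A ^ (1 + γ)) with hc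
    have hApos : (0 : ℝ) < A ^ (1 + γ) := Real.rpow_pos_of_pos hA _
    have hc0 : c ≠ 0 := (ENNReal.ofReal_pos.2 hApos).ne'
    have hcη0 : c ^ η ≠ 0 := (ENNReal.rpow_pos (ENNReal.ofReal_pos.2 hApos) ofReal_ne_top).ne'
    have hcηtop : c ^ η ≠ ⊤ := ENNReal.rpow_ne_top_of_nonneg hη0.le ofReal_ne_top
    -- Step A
    have hsub : {z : Fin n → Z | A ^ (1 + γ) ≤
        ∑' θ : {θ : Θ // ε < renyi ρ f η θstar θ},
          π θ.1 * (∏ i, f θ.1 (z i)) / ∏ i, f θstar (z i)} ⊆ {z | c ≤ T z} := by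
      intro z hz
      simp only [Set.mem_setOf_eq] at hz ⊢
      set g : {θ : Θ // ε < renyi ρ f η θstar θ} → ℝ := fun θ =>
        π θ.1 * (∏ i, f θ.1 (z i)) / ∏ i, f θstar (z i) with hg
      have hgnn : ∀ θ, 0 ≤ g θ := fun θ =>
        div_nonneg (mul_nonneg (hπ_pos θ.1).le (hprod_pos θ.1 z).le) (hprod_pos θstar z).le
      have hgsum : Summable g := by
        by_contra h
        rw [tsum_eq_zero_of_not_summable h] at hz
        linarith
      calc c ≤ ENNReal.ofReal (∑' θ, g θ) := ENNReal.ofReal_le_ofReal hz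
        _ = ∑' θ, ENNReal.ofReal (g θ) := ENNReal.ofReal_tsum_of_nonneg hgnn hgsum
        _ = T z := tsum_congr fun θ => by
            rw [hg, hG, ENNReal.ofReal_div_of_pos (hprod_pos θstar z),
              ENNReal.ofReal_mul (hπ_pos θ.1).le, div_eq_mul_inv]
    -- Step B: Markov
    have markov : μ {z | c ≤ T z} ≤ (c ^ η)⁻¹ * ∫⁻ z, T z ^ η ∂μ := by
      have h1 : {z | c ≤ T z} ⊆ {z | c ^ η ≤ T z ^ η} := fun z hz =>
        ENNReal.rpow_le_rpow hz hη0.le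
      calc μ {z | c ≤ T z} ≤ μ {z | c ^ η ≤ T z ^ η} := measure_mono h1
        _ = (c ^ η)⁻¹ * (c ^ η * μ {z | c ^ η ≤ T z ^ η}) := by
            rw [← mul_assoc, ENNReal.inv_mul_cancel hcη0 hcηtop, one_mul]
        _ ≤ (c ^ η)⁻¹ * ∫⁻ z, T z ^ η ∂μ :=
            mul_le_mul_right (mul_meas_ge_le_lintegral₀
              (hTmeas.pow measurable_const).aemeasurable _) _
    -- Step C
    have hCstep : ∫⁻ z, T z ^ η ∂μ ≤ ∑' θ, ∫⁻ z, G θ z ^ η ∂μ := by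
      calc ∫⁻ z, T z ^ η ∂μ ≤ ∫⁻ z, ∑' θ, G θ z ^ η ∂μ :=
          lintegral_mono fun z => rpow_tsum_le _ hη0 hη1.le
        _ = ∑' θ, ∫⁻ z, G θ z ^ η ∂μ :=
          lintegral_tsum fun θ => ((hGmeas θ).pow measurable_const).aemeasurable
    -- Step D
    have hD : ∀ θ : {θ : Θ // ε < renyi ρ f η θstar θ},
        ∫⁻ z, G θ z ^ η ∂μ ≤ ENNReal.ofReal (π θ.1 ^ η * Real.exp (-(n * η * ε))) := by
      intro θ
      have hre : ε < -(1 / η) * Real.log (∫ x, f θstar x ^ (1 - η) * f θ.1 x ^ η ∂ρ) := θ.2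
      have hbz : ∀ z : Fin n → Z, ENNReal.ofReal (∏ i, f θstar (z i)) ≠ 0 := fun z =>
        (ENNReal.ofReal_pos.2 (hprod_pos θstar z)).ne'
      have hkey : ∀ z : Fin n → Z,
          ENNReal.ofReal (∏ i, f θstar (z i)) * G θ z ^ η
            = ENNReal.ofReal (π θ.1) ^ η *
              ∏ i, (ENNReal.ofReal (f θ.1 (z i)) ^ η *
                ENNReal.ofReal (f θstar (z i)) ^ (1 - η)) := by
        intro z
        have hcinv : (ENNReal.ofReal (∏ i, f θstar (z i)))⁻¹ ≠ ⊤ :=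
          ENNReal.inv_ne_top.2 (hbz z)
        rw [hG]
        simp only []
        rw [ENNReal.mul_rpow_of_ne_top (ENNReal.mul_ne_top ofReal_ne_top ofReal_ne_top) hcinv,
          ENNReal.mul_rpow_of_ne_top ofReal_ne_top ofReal_ne_top, ENNReal.inv_rpow,
          ← ENNReal.rpow_neg]
        have h1 : ENNReal.ofReal (∏ i, f θstar (z i)) *
            (ENNReal.ofReal (π θ.1) ^ η * ENNReal.ofReal (∏ i, f θ.1 (z i)) ^ η *
              ENNReal.ofReal (∏ i, f θstar (z i)) ^ (-η))
            = ENNReal.ofReal (π θ.1) ^ η * (ENNReal.ofReal (∏ i, f θ.1 (z i)) ^ η *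
              (ENNReal.ofReal (∏ i, f θstar (z i)) ^ (1 : ℝ) *
                ENNReal.ofReal (∏ i, f θstar (z i)) ^ (-η))) := by
          rw [ENNReal.rpow_one]; ring
        rw [h1, ← ENNReal.rpow_add _ _ (hbz z) ofReal_ne_top]
        have h2 : (1 : ℝ) + -η = 1 - η := by ring
        rw [h2, ENNReal.ofReal_prod_of_nonneg (fun i _ => (hf_pos θ.1 (z i)).le),
          ENNReal.ofReal_prod_of_nonneg (fun i _ => (hf_pos θstar (z i)).le),
          ← ENNReal.prod_rpow_of_ne_top (fun i _ => ofReal_ne_top),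
          ← ENNReal.prod_rpow_of_ne_top (fun i _ => ofReal_ne_top),
          ← Finset.prod_mul_distrib]
      have hI : Integrable (fun x => f θstar x ^ (1 - η) * f θ.1 x ^ η) ρ :=
        integrable_rpow_mul (hf_meas θstar) (hf_meas θ.1) (hf_pos θstar) (hf_pos θ.1)
          (hInt θstar) (hInt θ.1) hη0.le hη1.le
      have hcoord : ∫⁻ x, ENNReal.ofReal (f θ.1 x) ^ η * ENNReal.ofReal (f θstar x) ^ (1 - η) ∂ρ
          = ENNReal.ofReal (∫ x, f θstar x ^ (1 - η) * f θ.1 x ^ η ∂ρ) := by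
        have : ∀ x, ENNReal.ofReal (f θ.1 x) ^ η * ENNReal.ofReal (f θstar x) ^ (1 - η)
            = ENNReal.ofReal (f θstar x ^ (1 - η) * f θ.1 x ^ η) := fun x => by
          rw [ENNReal.ofReal_rpow_of_pos (hf_pos θ.1 x),
            ENNReal.ofReal_rpow_of_pos (hf_pos θstar x),
            ← ENNReal.ofReal_mul (Real.rpow_nonneg (hf_pos θ.1 x).le _), mul_comm]
        rw [lintegral_congr this,
          ← ofReal_integral_eq_lintegral_ofReal hI (Filter.Eventually.of_forall fun x =>
            mul_nonneg (Real.rpow_nonneg (hf_pos θstar x).le _)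
              (Real.rpow_nonneg (hf_pos θ.1 x).le _))]
      have hIle : ∫ x, f θstar x ^ (1 - η) * f θ.1 x ^ η ∂ρ ≤ Real.exp (-(η * ε)) :=
        int_le_exp (integral_nonneg fun x =>
          mul_nonneg (Real.rpow_nonneg (hf_pos θstar x).le _)
            (Real.rpow_nonneg (hf_pos θ.1 x).le _)) hη0 hre
      have hcm : Measurable fun x =>
          ENNReal.ofReal (f θ.1 x) ^ η * ENNReal.ofReal (f θstar x) ^ (1 - η) :=
        ((ENNReal.measurable_ofReal.comp (hf_meas θ.1)).pow measurable_const).mul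
          ((ENNReal.measurable_ofReal.comp (hf_meas θstar)).pow measurable_const)
      have hpm : Measurable fun z : Fin n → Z =>
          ∏ i, (ENNReal.ofReal (f θ.1 (z i)) ^ η *
            ENNReal.ofReal (f θstar (z i)) ^ (1 - η)) :=
        Finset.measurable_prod _ fun i _ => hcm.comp (measurable_pi_apply i)
      calc ∫⁻ z, G θ z ^ η ∂μ
          = ∫⁻ z, ENNReal.ofReal (π θ.1) ^ η *
              ∏ i, (ENNReal.ofReal (f θ.1 (z i)) ^ η *
                ENNReal.ofReal (f θstar (z i)) ^ (1 - η)) ∂ν := by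
            rw [hμ, lintegral_withDensity_eq_lintegral_mul _ (hFmeas θstar)
              ((hGmeas θ).pow measurable_const)]
            exact lintegral_congr fun z => hkey z
        _ = ENNReal.ofReal (π θ.1) ^ η *
              (∫⁻ x, ENNReal.ofReal (f θ.1 x) ^ η *
                ENNReal.ofReal (f θstar x) ^ (1 - η) ∂ρ) ^ n := by
            rw [lintegral_const_mul _ hpm, lintegral_pi_prod ρ n _ hcm]
        _ ≤ ENNReal.ofReal (π θ.1) ^ η * ENNReal.ofReal (Real.exp (-(η * ε))) ^ n := by
            gcongr
            rw [hcoord]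
            exact ENNReal.ofReal_le_ofReal hIle
        _ = ENNReal.ofReal (π θ.1 ^ η * Real.exp (-(n * η * ε))) := by
            rw [ENNReal.ofReal_rpow_of_pos (hπ_pos θ.1),
              ← ENNReal.ofReal_pow (Real.exp_nonneg _), ← Real.exp_nat_mul,
              ← ENNReal.ofReal_mul (Real.rpow_nonneg (hπ_pos θ.1).le _)]
            congr 2
            ring_nf
    calc μ {z | A ^ (1 + γ) ≤
          ∑' θ : {θ : Θ // ε < renyi ρ f η θstar θ},
            π θ.1 * (∏ i, f θ.1 (z i)) / ∏ i, f θstar (z i)}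
        ≤ μ {z | c ≤ T z} := measure_mono hsub
      _ ≤ (c ^ η)⁻¹ * ∫⁻ z, T z ^ η ∂μ := markov
      _ ≤ (c ^ η)⁻¹ * ∑' θ, ∫⁻ z, G θ z ^ η ∂μ := mul_le_mul_right hCstep _
      _ ≤ (c ^ η)⁻¹ * ∑' θ : {θ : Θ // ε < renyi ρ f η θstar θ},
            ENNReal.ofReal (π θ.1 ^ η * Real.exp (-(n * η * ε))) :=
          mul_le_mul_right (ENNReal.tsum_le_tsum hD) _
      _ ≤ (c ^ η)⁻¹ * ∑' θ : Θ, ENNReal.ofReal (π θ ^ η * Real.exp (-(n * η * ε))) :=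
          mul_le_mul_right (ENNReal.tsum_comp_le_tsum_of_injective
            Subtype.val_injective fun θ => ENNReal.ofReal (π θ ^ η * Real.exp (-(n * η * ε)))) _
      _ = B := by
          have hcη : c ^ η = ENNReal.ofReal (A ^ ((1 + γ) * η)) := by
            rw [hc, ENNReal.ofReal_rpow_of_pos hApos, ← Real.rpow_mul hA.le]
          have hinv : (c ^ η)⁻¹ = ENNReal.ofReal (A ^ (-(η * (1 + γ)))) := by
            rw [hcη, ← ENNReal.ofReal_inv_of_pos (Real.rpow_pos_of_pos hA _),
              ← Real.rpow_neg hA.le]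
            congr 1
            ring_nf
          have htsum : ∑' θ : Θ, ENNReal.ofReal (π θ ^ η * Real.exp (-(n * η * ε)))
              = ENNReal.ofReal ((∑' θ, π θ ^ η) * Real.exp (-(n * η * ε))) := by
            simp_rw [ENNReal.ofReal_mul (Real.rpow_nonneg (hπ_pos _).le _)]
            rw [ENNReal.tsum_mul_right,
              ← ENNReal.ofReal_tsum_of_nonneg (fun θ => Real.rpow_nonneg (hπ_pos θ).le η) hsum,
              ENNReal.ofReal_mul (tsum_nonneg fun θ => Real.rpow_nonneg (hπ_pos θ).le η)]
          rw [hinv, htsum, hB, ← ENNReal.ofReal_mul (Real.rpow_nonneg hA.le _)]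
          congr 1
          ring_nf

  simp only [jointProb]
  have hπsummable : Summable π := by
    by_contra h
    rw [tsum_eq_zero_of_not_summable h] at hπ_sum
    exact one_ne_zero hπ_sum.symm
  calc ∑' θstar, ENNReal.ofReal (π θstar) *
        (ν.withDensity fun z => ENNReal.ofReal (∏ i, f θstar (z i)))
          {z | A ^ (1 + γ) ≤
            ∑' θ : {θ : Θ // ε < renyi ρ f η θstar θ},
              π θ.1 * (∏ i, f θ.1 (z i)) / ∏ i, f θstar (z i)}
      ≤ ∑' θstar, ENNReal.ofReal (π θstar) * B :=
        ENNReal.tsum_le_tsum fun θstar => mul_le_mul_right (main θstar) _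
    _ = (∑' θstar, ENNReal.ofReal (π θstar)) * B := ENNReal.tsum_mul_right
    _ = B := by
        rw [← ENNReal.ofReal_tsum_of_nonneg (fun θ => (hπ_pos θ).le) hπsummable, hπ_sum,
          ENNReal.ofReal_one, one_mul]
end
end

section
/- Let Θ be a countable model with prior π, let η ∈ (0,1) with Σ_{θ∈Θ} π(θ)^η < ∞, let A > 0, γ > 0 and n ≥ 1. Then the Bayesian joint probability Π( (θ*, Z^n) : ∏_{i=1}^n f_{θ*}(Z_i) / Σ_{θ∈Θ} π(θ) ∏_{i=1}^n f_θ(Z_i) ≥ A^{−γ} ) ≤ (Σ_{θ∈Θ} π(θ)^η) · A^{γ(1−η)}. -/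
open MeasureTheory ENNReal

noncomputable section

/-- lintegral of a product of one-coordinate functions over a finite product measure. -/
lemma lintegral_pi_prod_pow {Z : Type*} [MeasurableSpace Z] (ρ : Measure Z) [SigmaFinite ρ]
    (g : Z → ℝ≥0∞) (hg : Measurable g) :
    ∀ n : ℕ, ∫⁻ z, ∏ i : Fin n, g (z i) ∂(Measure.pi fun _ : Fin n => ρ)
      = (∫⁻ x, g x ∂ρ) ^ n := by
  intro n
  induction n with
  | zero =>
      simp [Measure.pi_univ]
  | succ n ih =>
      have hmp := measurePreserving_piFinSuccAbove (fun _ : Fin (n + 1) => ρ) 0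
      have key : ∫⁻ z, ∏ i : Fin (n + 1), g (z i) ∂(Measure.pi fun _ : Fin (n + 1) => ρ)
          = ∫⁻ p : Z × (Fin n → Z), g p.1 * ∏ j : Fin n, g (p.2 j)
              ∂(ρ.prod (Measure.pi fun _ : Fin n => ρ)) := by
        rw [← hmp.lintegral_comp]
        · refine lintegral_congr fun z => ?_
          simp [MeasurableEquiv.piFinSuccAbove, Fin.prod_univ_succ, Fin.succAbove, Fin.tail]
        · exact (hg.comp measurable_fst).mul
            (Finset.measurable_prod _ fun j _ => hg.comp ((measurable_pi_apply j).comp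
              measurable_snd))
      have hgn : Measurable fun x : Fin n → Z => ∏ j : Fin n, g (x j) :=
        Finset.measurable_prod _ fun j _ => hg.comp (measurable_pi_apply j)
      rw [key, lintegral_prod_mul (f := g) (g := fun x : Fin n → Z => ∏ j : Fin n, g (x j))
        hg.aemeasurable hgn.aemeasurable, ih, pow_succ]
      ring

/-- The Bayesian joint probability that the likelihood of the sampled parameter `θ*`
outcompetes the Bayes marginal likelihood by a factor `A^{-γ}` is at most
`(Σ_θ π(θ)^η) A^{γ(1-η)}`. -/
theorem bayesian_true_likelihood_vs_marginal_bound
    {Z : Type*} [MeasurableSpace Z] (ρ : Measure Z) [SigmaFinite ρ]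
    {Θ : Type*} [Countable Θ]
    (f : Θ → Z → ℝ) (hf_meas : ∀ θ, Measurable (f θ))
    (hf_pos : ∀ θ x, 0 < f θ x)
    (hf_int : ∀ θ, ∫ x, f θ x ∂ρ = 1)
    (π : Θ → ℝ) (hπ_pos : ∀ θ, 0 < π θ) (hπ_sum : ∑' θ, π θ = 1)
    (η : ℝ) (hη : η ∈ Set.Ioo (0 : ℝ) 1)
    (hsum : Summable fun θ => π θ ^ η)
    (A : ℝ) (hA : 0 < A) (γ : ℝ) (hγ : 0 < γ) (n : ℕ) (hn : 1 ≤ n) :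
    jointProb ρ π f n
        (fun θstar =>
          {z | A ^ (-γ) ≤
            (∏ i, f θstar (z i)) / ∑' θ, π θ * ∏ i, f θ (z i)})
      ≤ ENNReal.ofReal ((∑' θ, π θ ^ η) * A ^ (γ * (1 - η))) := by
  obtain ⟨hη0, hη1⟩ := hη
  set μ : Measure (Fin n → Z) := Measure.pi fun _ : Fin n => ρ with hμ
  -- each factor measure is a probability measure
  have hint : ∀ θ, Integrable (f θ) ρ := by
    intro θ
    by_contra h
    have h1 := hf_int θ
    rw [integral_undef h] at h1
    exact one_ne_zero h1.symm
  have hlint : ∀ θ, ∫⁻ x, ENNReal.ofReal (f θ x) ∂ρ = 1 := by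
    intro θ
    rw [← ofReal_integral_eq_lintegral_ofReal (hint θ)
      (Filter.Eventually.of_forall fun x => (hf_pos θ x).le), hf_int θ]
    simp
  have hmass : ∀ θ, (μ.withDensity fun z => ENNReal.ofReal (∏ i, f θ (z i))) Set.univ ≤ 1 := by
    intro θ
    rw [withDensity_apply _ MeasurableSet.univ, setLIntegral_univ]
    have : (fun z : Fin n → Z => ENNReal.ofReal (∏ i, f θ (z i)))
        = fun z => ∏ i : Fin n, ENNReal.ofReal (f θ (z i)) := by
      funext z
      exact ENNReal.ofReal_prod_of_nonneg fun i _ => (hf_pos θ (z i)).le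
    rw [this, lintegral_pi_prod_pow ρ (fun x => ENNReal.ofReal (f θ x))
      (ENNReal.measurable_ofReal.comp (hf_meas θ)) n, hlint θ, one_pow]
  -- per-term bound
  have hterm : ∀ θstar, ENNReal.ofReal (π θstar) *
      (μ.withDensity fun z => ENNReal.ofReal (∏ i, f θstar (z i)))
        {z | A ^ (-γ) ≤ (∏ i, f θstar (z i)) / ∑' θ, π θ * ∏ i, f θ (z i)}
      ≤ ENNReal.ofReal (π θstar ^ η * A ^ (γ * (1 - η))) := by
    intro θstar
    by_cases hcase : π θstar ≤ A ^ γ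
    · calc ENNReal.ofReal (π θstar) *
          (μ.withDensity fun z => ENNReal.ofReal (∏ i, f θstar (z i)))
            {z | A ^ (-γ) ≤ (∏ i, f θstar (z i)) / ∑' θ, π θ * ∏ i, f θ (z i)}
          ≤ ENNReal.ofReal (π θstar) * 1 := by
            exact mul_le_mul_right (le_trans (measure_mono (Set.subset_univ _))
              (hmass θstar)) _
        _ = ENNReal.ofReal (π θstar) := mul_one _
        _ ≤ ENNReal.ofReal (π θstar ^ η * A ^ (γ * (1 - η))) := by
            apply ENNReal.ofReal_le_ofReal
            have h1 : π θstar = π θstar ^ η * π θstar ^ (1 - η) := by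
              rw [← Real.rpow_add (hπ_pos θstar)]
              simp
            nth_rewrite 1 [h1]
            apply mul_le_mul_of_nonneg_left _ (Real.rpow_nonneg (hπ_pos θstar).le η)
            calc π θstar ^ (1 - η) ≤ (A ^ γ) ^ (1 - η) :=
                  Real.rpow_le_rpow (hπ_pos θstar).le hcase (by linarith)
              _ = A ^ (γ * (1 - η)) := (Real.rpow_mul hA.le γ (1 - η)).symm
    · -- the event is empty
      have hempty : {z : Fin n → Z |
          A ^ (-γ) ≤ (∏ i, f θstar (z i)) / ∑' θ, π θ * ∏ i, f θ (z i)} = ∅ := by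
        ext z
        simp only [Set.mem_setOf_eq, Set.mem_empty_iff_false, iff_false, not_le]
        set L : Θ → ℝ := fun θ => ∏ i, f θ (z i) with hL
        have hLpos : ∀ θ, 0 < L θ := fun θ => Finset.prod_pos fun i _ => hf_pos θ (z i)
        by_cases hsummable : Summable fun θ => π θ * L θ
        · set m := ∑' θ, π θ * L θ with hm
          have hmge : π θstar * L θstar ≤ m := Summable.le_tsum hsummable θstar
            fun θ _ => mul_nonneg (hπ_pos θ).le (hLpos θ).le
          have hmpos : 0 < m :=
            lt_of_lt_of_le (mul_pos (hπ_pos θstar) (hLpos θstar)) hmge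
          push_neg at hcase
          have hAγ : 0 < A ^ γ := Real.rpow_pos_of_pos hA γ
          have key : L θstar * A ^ γ < m :=
            lt_of_lt_of_le
              (by rw [mul_comm (π θstar)]; exact mul_lt_mul_of_pos_left hcase (hLpos θstar))
              hmge
          rw [div_lt_iff₀ hmpos, Real.rpow_neg hA.le, inv_mul_eq_div, lt_div_iff₀ hAγ]
          exact key
        · rw [tsum_eq_zero_of_not_summable hsummable, _root_.div_zero]
          exact Real.rpow_pos_of_pos hA (-γ)
      rw [hempty]
      simp
  calc jointProb ρ π f n (fun θstar =>
        {z | A ^ (-γ) ≤ (∏ i, f θstar (z i)) / ∑' θ, π θ * ∏ i, f θ (z i)})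
      ≤ ∑' θ, ENNReal.ofReal (π θ ^ η * A ^ (γ * (1 - η))) :=
        ENNReal.tsum_le_tsum hterm
    _ = ENNReal.ofReal (∑' θ, π θ ^ η * A ^ (γ * (1 - η))) := by
        rw [ENNReal.ofReal_tsum_of_nonneg
          (fun θ => mul_nonneg (Real.rpow_nonneg (hπ_pos θ).le η)
            (Real.rpow_nonneg hA.le _))
          (hsum.mul_right _)]
    _ = ENNReal.ofReal ((∑' θ, π θ ^ η) * A ^ (γ * (1 - η))) := by
        rw [tsum_mul_right]
end
end

section
/- Let Θ be a countable model with prior π whose density ratios are uniformly bounded by some v > 1. Then for every θ* ∈ Θ, every n and every z^n ∈ Z^n, the expected next-step mixability gap satisfies δ̄_n(θ*, z^n) ≤ Σ_{θ∈Θ} π(θ | z^n) · D(P_{θ*} ‖ P_θ), where D(P_{θ*} ‖ P_θ) = ∫_Z f_{θ*}(z) log( f_{θ*}(z)/f_θ(z) ) ρ(dz) is the Kullback–Leibler divergence. -/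
open MeasureTheory ENNReal

noncomputable section

/-- Unnormalized posterior weight of `θ` given the sample `z`. -/
def postNum {Z : Type*} {Θ : Type*} (π : Θ → ℝ) (f : Θ → Z → ℝ) {n : ℕ}
    (z : Fin n → Z) (θ : Θ) : ℝ :=
  π θ * ∏ i, f θ (z i)

/-- The Bayesian posterior of `θ` given the sample `z`. -/
def post {Z : Type*} {Θ : Type*} (π : Θ → ℝ) (f : Θ → Z → ℝ) {n : ℕ}
    (z : Fin n → Z) (θ : Θ) : ℝ :=
  postNum π f z θ / ∑' θ', postNum π f z θ'

/-- The Bayes predictive density of a next outcome `x` given the sample `z`. -/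
def pBayes {Z : Type*} {Θ : Type*} (π : Θ → ℝ) (f : Θ → Z → ℝ) {n : ℕ}
    (z : Fin n → Z) (x : Z) : ℝ :=
  ∑' θ, post π f z θ * f θ x

/-- The expected next-step mixability gap `δ̄_n(θ*, z^n)`. -/
def deltaBar {Z : Type*} [MeasurableSpace Z] (ρ : Measure Z) {Θ : Type*}
    (π : Θ → ℝ) (f : Θ → Z → ℝ) {n : ℕ} (θstar : Θ) (z : Fin n → Z) : ℝ :=
  ∫ x, ((∑' θ, post π f z θ * (-Real.log (f θ x))) + Real.log (pBayes π f z x)) *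
    f θstar x ∂ρ

/-- The Kullback–Leibler divergence `D(P_{θ*} ‖ P_θ) = ∫ f_{θ*} log(f_{θ*}/f_θ) dρ`. -/
def KLdiv {Z : Type*} [MeasurableSpace Z] (ρ : Measure Z) {Θ : Type*}
    (f : Θ → Z → ℝ) (θstar θ : Θ) : ℝ :=
  ∫ x, f θstar x * Real.log (f θstar x / f θ x) ∂ρ

/-!
Writing `g = f_{θ*}` and `p` for the Bayes predictive density, the integrand of `δ̄_n` splits as
`∑_θ π(θ | z^n) g log (g / f_θ) + g log (p / g)`. Integrating the first part term by term gives
the posterior-expected divergence, and the second part integrates to `-D(P_{θ*} ‖ p) ≤ 0` by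
Gibbs' inequality `g log (p / g) ≤ p - g`. The bounded density ratios make every logarithm
involved bounded by `log v`, which supplies all the summability and integrability needed.
-/

open Set

lemma abs_log_div_le_log {a b v : ℝ} (ha : 0 < a) (hb : 0 < b) (hab : a ≤ v * b)
    (hba : b ≤ v * a) : |Real.log (a / b)| ≤ Real.log v := by
  have hv : 0 < v := (pos_iff_pos_of_mul_pos (ha.trans_le hab)).2 hb
  rw [abs_le, ← Real.log_inv]
  constructor
  · exact Real.log_le_log (inv_pos.2 hv) ((le_div_iff₀ hb).2 ((inv_mul_le_iff₀ hv).2 hba))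
  · exact Real.log_le_log (div_pos ha hb) ((div_le_iff₀ hb).2 hab)

lemma abs_mul_log_div_le {a b c v : ℝ} (hc : 0 ≤ c) (ha : 0 < a) (hb : 0 < b) (hab : a ≤ v * b)
    (hba : b ≤ v * a) : |c * Real.log (a / b)| ≤ Real.log v * c := by
  rw [abs_mul, abs_of_nonneg hc, mul_comm]
  exact mul_le_mul_of_nonneg_right (abs_log_div_le_log ha hb hab hba) hc

lemma mul_log_div_le_sub {a b : ℝ} (ha : 0 < a) (hb : 0 < b) : a * Real.log (b / a) ≤ b - a := by
  calc a * Real.log (b / a) ≤ a * (b / a - 1) :=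
        mul_le_mul_of_nonneg_left (Real.log_le_sub_one_of_pos (div_pos hb ha)) ha.le
    _ = b - a := by field_simp

section Mixture

variable {Θ : Type*} {w : Θ → ℝ}

lemma summable_mul_of_mem_Icc (hw₀ : ∀ θ, 0 ≤ w θ) (hw : Summable w) {b : Θ → ℝ} {lo hi : ℝ}
    (hb : ∀ θ, b θ ∈ Icc lo hi) : Summable fun θ => w θ * b θ :=
  Summable.of_norm_bounded (hw.mul_right (max |lo| |hi|)) fun θ => by
    rw [norm_mul, Real.norm_of_nonneg (hw₀ θ), Real.norm_eq_abs]
    exact mul_le_mul_of_nonneg_left (abs_le_max_abs_abs (hb θ).1 (hb θ).2) (hw₀ θ)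

lemma tsum_mul_mem_Icc (hw₀ : ∀ θ, 0 ≤ w θ) (hw : HasSum w 1) {b : Θ → ℝ} {lo hi : ℝ}
    (hb : ∀ θ, b θ ∈ Icc lo hi) : ∑' θ, w θ * b θ ∈ Icc lo hi := by
  have hsum := (summable_mul_of_mem_Icc hw₀ hw.summable hb).hasSum
  constructor
  · simpa using hasSum_le (fun θ => mul_le_mul_of_nonneg_left (hb θ).1 (hw₀ θ))
      (hw.mul_right lo) hsum
  · simpa using hasSum_le (fun θ => mul_le_mul_of_nonneg_left (hb θ).2 (hw₀ θ))
      hsum (hw.mul_right hi)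

end Mixture

lemma measurable_tsum_of_summable {α ι E : Type*} [MeasurableSpace α] [Countable ι]
    [TopologicalSpace E] [TopologicalSpace.PseudoMetrizableSpace E] [AddCommMonoid E]
    [MeasurableSpace E] [BorelSpace E] [MeasurableAdd₂ E] {F : ι → α → E} (hF : ∀ i, Measurable (F i))
    (hs : ∀ x, Summable fun i => F i x) : Measurable fun x => ∑' i, F i x :=
  measurable_of_tendsto_metrizable' Filter.atTop
    (fun s => Finset.measurable_sum s fun i _ => hF i)
    (tendsto_pi_nhds.2 fun x => (hs x).hasSum)

section MixtureIntegral

variable {α Θ : Type*} [MeasurableSpace α] [Countable Θ] {μ : Measure α} {w : Θ → ℝ}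
  {F : Θ → α → ℝ} {G : α → ℝ}

lemma integrable_tsum_mul (hw₀ : ∀ θ, 0 ≤ w θ) (hw : HasSum w 1) (hF : ∀ θ, Measurable (F θ))
    (hG : Integrable G μ) (hFG : ∀ θ x, |F θ x| ≤ G x) :
    Integrable (fun x => ∑' θ, w θ * F θ x) μ := by
  have hFG' : ∀ x θ, F θ x ∈ Icc (-G x) (G x) := fun x θ => abs_le.1 (hFG θ x)
  refine hG.mono' ?_ (ae_of_all _ fun x => ?_)
  · exact (measurable_tsum_of_summable (fun θ => (hF θ).const_mul (w θ))
      fun x => summable_mul_of_mem_Icc hw₀ hw.summable (hFG' x)).aestronglyMeasurable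
  · exact Real.norm_eq_abs _ ▸ abs_le.2 (tsum_mul_mem_Icc hw₀ hw (hFG' x))

lemma integral_tsum_mul (hw₀ : ∀ θ, 0 ≤ w θ) (hw : Summable w) (hF : ∀ θ, Measurable (F θ))
    (hG : Integrable G μ) (hFG : ∀ θ x, |F θ x| ≤ G x) :
    ∫ x, ∑' θ, w θ * F θ x ∂μ = ∑' θ, w θ * ∫ x, F θ x ∂μ := by
  have hF_int : ∀ θ, Integrable (F θ) μ := fun θ =>
    hG.mono' (hF θ).aestronglyMeasurable (ae_of_all _ fun x => hFG θ x)
  have hnorm : ∀ θ, ∫ x, ‖w θ * F θ x‖ ∂μ ≤ w θ * ∫ x, G x ∂μ := fun θ => by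
    rw [← integral_const_mul]
    refine integral_mono ((hF_int θ).const_mul _).norm (hG.const_mul _) fun x => ?_
    rw [norm_mul, Real.norm_of_nonneg (hw₀ θ), Real.norm_eq_abs]
    exact mul_le_mul_of_nonneg_left (hFG θ x) (hw₀ θ)
  rw [← integral_tsum_of_summable_integral_norm (fun θ => (hF_int θ).const_mul (w θ))
    (Summable.of_nonneg_of_le (fun θ => integral_nonneg fun x => norm_nonneg _) hnorm
      (hw.mul_right _))]
  exact tsum_congr fun θ => integral_const_mul _ _

end MixtureIntegral

lemma integral_mul_log_div_le {α : Type*} [MeasurableSpace α] {μ : Measure α} {g q : α → ℝ}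
    (hg : ∀ x, 0 < g x) (hq : ∀ x, 0 < q x) (hg_int : Integrable g μ) (hq_int : Integrable q μ)
    (h_int : Integrable (fun x => g x * Real.log (q x / g x)) μ) :
    ∫ x, g x * Real.log (q x / g x) ∂μ ≤ ∫ x, q x ∂μ - ∫ x, g x ∂μ := by
  rw [← integral_sub hq_int hg_int]
  exact integral_mono h_int (hq_int.sub hg_int) fun x => mul_log_div_le_sub (hg x) (hq x)

lemma mixability_integrand_eq {Θ : Type*} {w a : Θ → ℝ} {g q : ℝ} (hw : HasSum w 1)
    (ha : ∀ θ, 0 < a θ) (hg : 0 < g) (hq : 0 < q)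
    (hs : Summable fun θ => w θ * Real.log (g / a θ)) :
    ((∑' θ, w θ * -Real.log (a θ)) + Real.log q) * g =
      (∑' θ, w θ * (g * Real.log (g / a θ))) + g * Real.log (q / g) := by
  have hneg : ∑' θ, w θ * -Real.log (a θ) = (∑' θ, w θ * Real.log (g / a θ)) - Real.log g := by
    have : ∀ θ, w θ * -Real.log (a θ) = w θ * Real.log (g / a θ) - w θ * Real.log g := fun θ => by
      rw [Real.log_div hg.ne' (ha θ).ne']; ring
    rw [tsum_congr this, hs.tsum_sub (hw.summable.mul_right _), tsum_mul_right, hw.tsum_eq,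
      one_mul]
  have hmul : ∑' θ, w θ * (g * Real.log (g / a θ)) = g * ∑' θ, w θ * Real.log (g / a θ) := by
    rw [← tsum_mul_left]
    exact tsum_congr fun θ => by ring
  rw [hneg, hmul, Real.log_div hq.ne' hg.ne']
  ring

section Posterior

variable {Z Θ : Type*} {π : Θ → ℝ} {f : Θ → Z → ℝ} {n : ℕ} {z : Fin n → Z} {v : ℝ}

lemma postNum_nonneg (hπ : ∀ θ, 0 ≤ π θ) (hf : ∀ θ x, 0 ≤ f θ x) (θ : Θ) :
    0 ≤ postNum π f z θ :=
  mul_nonneg (hπ θ) (Finset.prod_nonneg fun i _ => hf θ (z i))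

lemma postNum_pos (hπ : ∀ θ, 0 < π θ) (hf : ∀ θ x, 0 < f θ x) (θ : Θ) : 0 < postNum π f z θ :=
  mul_pos (hπ θ) (Finset.prod_pos fun i _ => hf θ (z i))

lemma summable_postNum [Nonempty Θ] (hπ : Summable π) (hπ₀ : ∀ θ, 0 ≤ π θ)
    (hf₀ : ∀ θ x, 0 ≤ f θ x) (hratio : ∀ x θ θ', f θ x ≤ v * f θ' x) :
    Summable (postNum π f z) :=
  let θ₀ := Classical.arbitrary Θ
  Summable.of_nonneg_of_le (postNum_nonneg hπ₀ hf₀)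
    (fun θ => mul_le_mul_of_nonneg_left
      (Finset.prod_le_prod (fun i _ => hf₀ θ (z i)) fun i _ => hratio (z i) θ θ₀) (hπ₀ θ))
    (hπ.mul_right (∏ i, v * f θ₀ (z i)))

lemma post_nonneg (hπ : ∀ θ, 0 ≤ π θ) (hf : ∀ θ x, 0 ≤ f θ x) (θ : Θ) : 0 ≤ post π f z θ :=
  div_nonneg (postNum_nonneg hπ hf θ) (tsum_nonneg (postNum_nonneg hπ hf))

lemma hasSum_post [Nonempty Θ] (hπ : ∀ θ, 0 < π θ) (hf : ∀ θ x, 0 < f θ x)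
    (hs : Summable (postNum π f z)) : HasSum (post π f z) 1 := by
  have htsum : 0 < ∑' θ, postNum π f z θ := hs.tsum_pos (postNum_nonneg (hπ · |>.le)
    (fun θ x => (hf θ x).le)) _ (postNum_pos hπ hf (Classical.arbitrary Θ))
  have h := hs.hasSum.div_const (∑' θ, postNum π f z θ)
  rwa [div_self htsum.ne'] at h

lemma pBayes_mem_Icc (hw₀ : ∀ θ, 0 ≤ post π f z θ) (hw : HasSum (post π f z) 1) (hv : 0 < v)
    (hratio : ∀ x θ θ', f θ x ≤ v * f θ' x) (θ₀ : Θ) (x : Z) :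
    pBayes π f z x ∈ Icc (f θ₀ x / v) (v * f θ₀ x) :=
  tsum_mul_mem_Icc hw₀ hw fun θ => ⟨(div_le_iff₀' hv).2 (hratio x θ₀ θ), hratio x θ θ₀⟩

lemma pBayes_pos (hw₀ : ∀ θ, 0 ≤ post π f z θ) (hw : HasSum (post π f z) 1) (hv : 0 < v)
    (hf : ∀ θ x, 0 < f θ x) (hratio : ∀ x θ θ', f θ x ≤ v * f θ' x) (θ₀ : Θ) (x : Z) :
    0 < pBayes π f z x :=
  (div_pos (hf θ₀ x) hv).trans_le (pBayes_mem_Icc hw₀ hw hv hratio θ₀ x).1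

lemma abs_le_mul_of_ratio (hf : ∀ θ x, 0 < f θ x) (hratio : ∀ x θ θ', f θ x ≤ v * f θ' x)
    (θ₀ θ : Θ) (x : Z) : |f θ x| ≤ v * f θ₀ x :=
  (abs_of_pos (hf θ x)).trans_le (hratio x θ θ₀)

lemma abs_mul_log_div_le_of_ratio (hf : ∀ θ x, 0 < f θ x)
    (hratio : ∀ x θ θ', f θ x ≤ v * f θ' x) (θ₀ θ : Θ) (x : Z) :
    |f θ₀ x * Real.log (f θ₀ x / f θ x)| ≤ Real.log v * f θ₀ x :=
  abs_mul_log_div_le (hf θ₀ x).le (hf θ₀ x) (hf θ x) (hratio x θ₀ θ) (hratio x θ θ₀)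

end Posterior

section Predictive

variable {Z Θ : Type*} [MeasurableSpace Z] {ρ : Measure Z} {π : Θ → ℝ}
  {f : Θ → Z → ℝ} {n : ℕ} {z : Fin n → Z} {v : ℝ}

lemma deltaBar_eq_integral_add (hw₀ : ∀ θ, 0 ≤ post π f z θ) (hw : HasSum (post π f z) 1)
    (hv : 0 < v) (hf : ∀ θ x, 0 < f θ x) (hratio : ∀ x θ θ', f θ x ≤ v * f θ' x) (θ₀ : Θ) :
    deltaBar ρ π f θ₀ z = ∫ x, (∑' θ, post π f z θ * (f θ₀ x * Real.log (f θ₀ x / f θ x))) +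
      f θ₀ x * Real.log (pBayes π f z x / f θ₀ x) ∂ρ :=
  integral_congr_ae <| ae_of_all _ fun x =>
    mixability_integrand_eq hw (hf · x) (hf θ₀ x) (pBayes_pos hw₀ hw hv hf hratio θ₀ x) <|
      summable_mul_of_mem_Icc hw₀ hw.summable fun θ => abs_le.1 <|
        abs_log_div_le_log (hf θ₀ x) (hf θ x) (hratio x θ₀ θ) (hratio x θ θ₀)

lemma integrable_pBayes [Countable Θ] (hw₀ : ∀ θ, 0 ≤ post π f z θ)
    (hw : HasSum (post π f z) 1) (hf_meas : ∀ θ, Measurable (f θ)) (hf : ∀ θ x, 0 < f θ x)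
    (hratio : ∀ x θ θ', f θ x ≤ v * f θ' x) {θ₀ : Θ} (hf_int : Integrable (f θ₀) ρ) :
    Integrable (pBayes π f z) ρ :=
  integrable_tsum_mul hw₀ hw hf_meas (hf_int.const_mul v) (abs_le_mul_of_ratio hf hratio θ₀)

lemma integral_pBayes [Countable Θ] (hw₀ : ∀ θ, 0 ≤ post π f z θ)
    (hw : HasSum (post π f z) 1) (hf_meas : ∀ θ, Measurable (f θ)) (hf : ∀ θ x, 0 < f θ x)
    (hratio : ∀ x θ θ', f θ x ≤ v * f θ' x) (hf_int : ∀ θ, ∫ x, f θ x ∂ρ = 1) (θ₀ : Θ) :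
    ∫ x, pBayes π f z x ∂ρ = 1 := by
  unfold pBayes
  rw [integral_tsum_mul hw₀ hw.summable hf_meas
    ((Integrable.of_integral_ne_zero (by simp [hf_int θ₀])).const_mul v)
    (abs_le_mul_of_ratio hf hratio θ₀)]
  simp [hf_int, hw.tsum_eq]

lemma integrable_mul_log_pBayes_div [Countable Θ] (hw₀ : ∀ θ, 0 ≤ post π f z θ)
    (hw : HasSum (post π f z) 1) (hf_meas : ∀ θ, Measurable (f θ)) (hf : ∀ θ x, 0 < f θ x)
    (hv : 0 < v) (hratio : ∀ x θ θ', f θ x ≤ v * f θ' x) {θ₀ : Θ}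
    (hf_int : Integrable (f θ₀) ρ) :
    Integrable (fun x => f θ₀ x * Real.log (pBayes π f z x / f θ₀ x)) ρ := by
  have hp_Icc := pBayes_mem_Icc hw₀ hw hv hratio θ₀
  refine (hf_int.const_mul (Real.log v)).mono' ?_ (ae_of_all _ fun x => ?_)
  · exact ((hf_meas θ₀).aemeasurable.mul ((integrable_pBayes hw₀ hw hf_meas hf hratio
      hf_int).aemeasurable.div (hf_meas θ₀).aemeasurable).log).aestronglyMeasurable
  · exact abs_mul_log_div_le (hf θ₀ x).le (pBayes_pos hw₀ hw hv hf hratio θ₀ x) (hf θ₀ x)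
      (hp_Icc x).2 ((div_le_iff₀' hv).1 (hp_Icc x).1)

lemma integral_mul_log_pBayes_div_nonpos [Countable Θ] (hw₀ : ∀ θ, 0 ≤ post π f z θ)
    (hw : HasSum (post π f z) 1) (hf_meas : ∀ θ, Measurable (f θ)) (hf : ∀ θ x, 0 < f θ x)
    (hv : 0 < v) (hratio : ∀ x θ θ', f θ x ≤ v * f θ' x) (hf_int : ∀ θ, ∫ x, f θ x ∂ρ = 1)
    (θ₀ : Θ) : ∫ x, f θ₀ x * Real.log (pBayes π f z x / f θ₀ x) ∂ρ ≤ 0 := by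
  have hg_int : Integrable (f θ₀) ρ := .of_integral_ne_zero (by simp [hf_int])
  have h := integral_mul_log_div_le (hf θ₀) (pBayes_pos hw₀ hw hv hf hratio θ₀) hg_int
    (integrable_pBayes hw₀ hw hf_meas hf hratio hg_int)
    (integrable_mul_log_pBayes_div hw₀ hw hf_meas hf hv hratio hg_int)
  rwa [integral_pBayes hw₀ hw hf_meas hf hratio hf_int θ₀, hf_int, sub_self] at h

end Predictive

theorem deltaBar_le_posterior_expected_KL_general
    {Z : Type*} [MeasurableSpace Z] (ρ : Measure Z)
    {Θ : Type*} [Countable Θ]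
    (f : Θ → Z → ℝ) (hf_meas : ∀ θ, Measurable (f θ))
    (hf_pos : ∀ θ x, 0 < f θ x)
    (hf_int : ∀ θ, ∫ x, f θ x ∂ρ = 1)
    (π : Θ → ℝ) (hπ_pos : ∀ θ, 0 < π θ) (hπ_sum : ∑' θ, π θ = 1)
    (v : ℝ) (hv : 1 < v)
    (hratio : ∀ (x : Z) (θ θ' : Θ), f θ x ≤ v * f θ' x)
    (θstar : Θ) (n : ℕ) (z : Fin n → Z) :
    deltaBar ρ π f θstar z ≤ ∑' θ, post π f z θ * KLdiv ρ f θstar θ := by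
  have : Nonempty Θ := ⟨θstar⟩
  have hv₀ : 0 < v := one_pos.trans hv
  have hπ : Summable π := by
    by_contra h
    simp [tsum_eq_zero_of_not_summable h] at hπ_sum
  have hπ₀ : ∀ θ, 0 ≤ π θ := fun θ => (hπ_pos θ).le
  have hf₀ : ∀ θ x, 0 ≤ f θ x := fun θ x => (hf_pos θ x).le
  have hw₀ := post_nonneg (z := z) hπ₀ hf₀
  have hw := hasSum_post (z := z) hπ_pos hf_pos (summable_postNum hπ hπ₀ hf₀ hratio)
  have hg_int : Integrable (f θstar) ρ := .of_integral_ne_zero (by simp [hf_int])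
  have hKL_meas : ∀ θ, Measurable fun x => f θstar x * Real.log (f θstar x / f θ x) :=
    fun θ => (hf_meas θstar).mul ((hf_meas θstar).div (hf_meas θ)).log
  have hKL_bound := abs_mul_log_div_le_of_ratio hf_pos hratio θstar
  rw [deltaBar_eq_integral_add hw₀ hw hv₀ hf_pos hratio,
    integral_add (integrable_tsum_mul hw₀ hw hKL_meas (hg_int.const_mul _) hKL_bound)
      (integrable_mul_log_pBayes_div hw₀ hw hf_meas hf_pos hv₀ hratio hg_int),
    integral_tsum_mul hw₀ hw.summable hKL_meas (hg_int.const_mul _) hKL_bound]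
  exact add_le_of_nonpos_right
    (integral_mul_log_pBayes_div_nonpos hw₀ hw hf_meas hf_pos hv₀ hratio hf_int θstar)

/-- The expected next-step mixability gap is bounded by the posterior-expected
Kullback–Leibler divergence: `δ̄_n(θ*, z^n) ≤ Σ_θ π(θ | z^n) D(P_{θ*} ‖ P_θ)`. -/
theorem deltaBar_le_posterior_expected_KL
    {Z : Type*} [MeasurableSpace Z] (ρ : Measure Z) [SigmaFinite ρ]
    {Θ : Type*} [Countable Θ]
    (f : Θ → Z → ℝ) (hf_meas : ∀ θ, Measurable (f θ))
    (hf_pos : ∀ θ x, 0 < f θ x)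
    (hf_int : ∀ θ, ∫ x, f θ x ∂ρ = 1)
    (π : Θ → ℝ) (hπ_pos : ∀ θ, 0 < π θ) (hπ_sum : ∑' θ, π θ = 1)
    (v : ℝ) (hv : 1 < v)
    (hratio : ∀ (x : Z) (θ θ' : Θ), f θ x ≤ v * f θ' x)
    (θstar : Θ) (n : ℕ) (z : Fin n → Z) :
    deltaBar ρ π f θstar z ≤ ∑' θ, post π f z θ * KLdiv ρ f θstar θ :=
  deltaBar_le_posterior_expected_KL_general ρ f hf_meas hf_pos hf_int π hπ_pos hπ_sum v hv hratio
    θstar n z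
end
end
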